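/- arXiv:1909.00320 — 5 statements merged into one kernel-verified Lean document; each statement's English description precedes it below -/
import Mathlib

section
/- Let A be an (m+1)×(m+1) real symmetric matrix with smallest eigenvalue λ₁. Then the maximum over unit vectors x ∈ ℝ^{m+1} of the squared Frobenius distance ‖x xᵀ − A‖₀² equals Tr(A²) + 1 − 2 λ₁, and a unit vector x attains this maximum if and only if x is an eigenvector of A corresponding to the eigenvalue λ₁. -/
/-!
Since `x xᵀ` is a rank-one projection for a unit vector `x`,
`Tr((x xᵀ - A)²) = Tr(A²) + 1 - 2 xᵀ A x`, so maximizing the distance means minimizing the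
Rayleigh quotient `xᵀ A x`. Minimality of `λ₁` makes `A - λ₁ I` positive semidefinite, so
`xᵀ A x ≥ λ₁`, with equality iff `(A - λ₁ I) x = 0`.
-/

open Matrix

namespace Matrix

variable {n R : Type*} [Fintype n]

theorem trace_vecMulVec_mul [CommSemiring R] (x y : n → R) (M : Matrix n n R) :
    trace (vecMulVec x y * M) = y ⬝ᵥ M *ᵥ x := by
  rw [vecMulVec_mul, trace_vecMulVec, dotProduct_comm, ← dotProduct_mulVec]

theorem trace_mul_self_vecMulVec_sub [CommRing R] (A : Matrix n n R) {x : n → R}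
    (hx : x ⬝ᵥ x = 1) :
    trace ((vecMulVec x x - A) * (vecMulVec x x - A)) =
      trace (A * A) + 1 - 2 * (x ⬝ᵥ A *ᵥ x) := by
  have hxx : trace (vecMulVec x x * vecMulVec x x) = 1 := by
    rw [vecMulVec_mul_vecMulVec, hx, one_smul, trace_vecMulVec, hx]
  have hAx : trace (A * vecMulVec x x) = x ⬝ᵥ A *ᵥ x := by
    rw [trace_mul_comm, trace_vecMulVec_mul]
  rw [sub_mul, mul_sub, mul_sub, trace_sub, trace_sub, trace_sub, hxx, hAx, trace_vecMulVec_mul]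
  ring

variable [DecidableEq n] {A : Matrix n n ℝ} {lam : ℝ}

theorem IsHermitian.posSemidef_sub_smul_one (hA : A.IsHermitian)
    (hmin : ∀ (c : ℝ) (w : n → ℝ), w ≠ 0 → A *ᵥ w = c • w → lam ≤ c) :
    (A - lam • 1).PosSemidef := by
  have hB : (A - lam • 1).IsHermitian := hA.sub (isHermitian_one.smul (.all lam))
  refine hB.posSemidef_iff_eigenvalues_nonneg.mpr fun i => ?_
  set v : n → ℝ := ⇑(hB.eigenvectorBasis i)
  have hv : v ≠ 0 := by
    simpa [v] using hB.eigenvectorBasis.orthonormal.ne_zero i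
  have hAv : A *ᵥ v = (hB.eigenvalues i + lam) • v := by
    have := hB.mulVec_eigenvectorBasis i
    rw [sub_mulVec, smul_mulVec, one_mulVec, sub_eq_iff_eq_add] at this
    rw [this, add_smul]
  have := hmin _ v hv hAv
  show (0 : ℝ) ≤ _
  linarith

namespace PosSemidef

variable (hA : (A - lam • 1).PosSemidef) {x : n → ℝ} (hx : x ⬝ᵥ x = 1)
include hA hx

theorem le_dotProduct_mulVec : lam ≤ x ⬝ᵥ A *ᵥ x := by
  have := hA.dotProduct_mulVec_nonneg x
  simp only [star_trivial, sub_mulVec, smul_mulVec, one_mulVec, dotProduct_sub,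
    dotProduct_smul, hx, smul_eq_mul, mul_one] at this
  linarith

theorem dotProduct_mulVec_eq_iff : x ⬝ᵥ A *ᵥ x = lam ↔ A *ᵥ x = lam • x := by
  simpa only [star_trivial, sub_mulVec, smul_mulVec, one_mulVec, dotProduct_sub,
    dotProduct_smul, hx, smul_eq_mul, mul_one, sub_eq_zero] using hA.dotProduct_mulVec_zero_iff x

end PosSemidef

end Matrix

/-- Let `A` be an `(m+1)×(m+1)` real symmetric matrix with smallest
eigenvalue `λ₁`. Then the maximum over unit vectors `x` of `Tr((x xᵀ - A)²)` equals
`Tr(A²) + 1 - 2 λ₁`, and a unit vector `x` attains it iff `x` is an eigenvector of `A`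
for the eigenvalue `λ₁`. -/
theorem vw_farthest_distance (m : ℕ) (A : Matrix (Fin (m + 1)) (Fin (m + 1)) ℝ)
    (hA : A.IsSymm) (lam : ℝ)
    (hev : ∃ v : Fin (m + 1) → ℝ, v ⬝ᵥ v = 1 ∧ A *ᵥ v = lam • v)
    (hmin : ∀ (c : ℝ) (w : Fin (m + 1) → ℝ), w ≠ 0 → A *ᵥ w = c • w → lam ≤ c) :
    IsGreatest {t : ℝ | ∃ x : Fin (m + 1) → ℝ, x ⬝ᵥ x = 1 ∧
        t = Matrix.trace ((vecMulVec x x - A) * (vecMulVec x x - A))}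
      (Matrix.trace (A * A) + 1 - 2 * lam) ∧
    (∀ x : Fin (m + 1) → ℝ, x ⬝ᵥ x = 1 →
      (Matrix.trace ((vecMulVec x x - A) * (vecMulVec x x - A))
          = Matrix.trace (A * A) + 1 - 2 * lam ↔ A *ᵥ x = lam • x)) := by
  have hpsd := (isHermitian_iff_isSymm.mpr hA).posSemidef_sub_smul_one hmin
  have attains_iff (x : Fin (m + 1) → ℝ) (hx : x ⬝ᵥ x = 1) :
      trace ((vecMulVec x x - A) * (vecMulVec x x - A)) = trace (A * A) + 1 - 2 * lam ↔
        A *ᵥ x = lam • x := by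
    rw [trace_mul_self_vecMulVec_sub A hx, ← hpsd.dotProduct_mulVec_eq_iff hx]
    constructor <;> intro h <;> linarith
  obtain ⟨v, hv, hAv⟩ := hev
  refine ⟨⟨⟨v, hv, ((attains_iff v hv).mpr hAv).symm⟩, ?_⟩, attains_iff⟩
  rintro t ⟨x, hx, rfl⟩
  rw [trace_mul_self_vecMulVec_sub A hx]
  linarith [hpsd.le_dotProduct_mulVec hx]
end

section
/- Let Q be a probability measure on the unit sphere S^m ⊂ ℝ^{m+1} and let μ = ∫ x xᵀ Q(dx) be the second moment matrix. Then a unit vector v ∈ ℝ^{m+1} maximizes the Fréchet function F(p) = ∫ ‖p pᵀ − x xᵀ‖₀² Q(dx) over unit vectors p if and only if v is an eigenvector of μ corresponding to the smallest eigenvalue λ(1) of μ. Equivalently, the VW antimean set of Q on ℝP^m is the set of points [v] with v a unit vector in the eigenspace of μ for λ(1). -/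
/-!
For unit vectors `p` and `x`, `‖p pᵀ - x xᵀ‖₀² = 2 - 2 ⟨p, x⟩²`, so the Fréchet function is
`F(p) = 2 - 2 pᵀ μ p`. Maximising `F` on the sphere thus means minimising the Rayleigh quotient
of the symmetric matrix `μ`. By Lagrange multipliers every minimiser is an eigenvector, and
since the sphere is compact a minimiser exists; comparing with normalised eigenvectors shows the
minimisers are exactly the unit eigenvectors for the smallest eigenvalue.
-/

open Matrix MeasureTheory
open scoped RealInnerProductSpace

section Rayleigh

variable {E : Type*} [NormedAddCommGroup E] [InnerProductSpace ℝ E]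

lemma inner_apply_self_eq_of_apply_eq_smul {T : E →L[ℝ] E} {c : ℝ} {x : E}
    (hx : T x = c • x) (hx1 : ‖x‖ = 1) : ⟪T x, x⟫ = c := by
  rw [hx, real_inner_smul_left, real_inner_self_eq_norm_sq, hx1, one_pow, mul_one]

lemma IsSelfAdjoint.exists_apply_eq_smul_of_isMinOn [CompleteSpace E] {T : E →L[ℝ] E}
    (hT : IsSelfAdjoint T) {x : E} (hx : ‖x‖ = 1)
    (hmin : IsMinOn (fun y ↦ ⟪T y, y⟫) (Metric.sphere 0 1) x) : ∃ c : ℝ, T x = c • x := by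
  have hmin' : IsMinOn T.reApplyInnerSelf (Metric.sphere 0 ‖x‖) x := by rw [hx]; exact hmin
  exact ⟨_, hT.eq_smul_self_of_isLocalExtrOn (Or.inl hmin'.localize)⟩

variable [ProperSpace E]

lemma IsSelfAdjoint.isMinOn_inner_sphere_iff {T : E →L[ℝ] E} (hT : IsSelfAdjoint T) {x : E}
    (hx : ‖x‖ = 1) :
    IsMinOn (fun y ↦ ⟪T y, y⟫) (Metric.sphere 0 1) x ↔
      ∃ lam : ℝ, T x = lam • x ∧ ∀ (c : ℝ) (w : E), w ≠ 0 → T w = c • w → lam ≤ c := by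
  constructor
  · intro hmin
    obtain ⟨lam, hlam⟩ := hT.exists_apply_eq_smul_of_isMinOn hx hmin
    refine ⟨lam, hlam, fun c w hw hcw ↦ ?_⟩
    set u := ‖w‖⁻¹ • w
    have hu : ‖u‖ = 1 := norm_smul_inv_norm hw
    have hcu : T u = c • u := by rw [map_smul, hcw, smul_comm]
    calc lam = ⟪T x, x⟫ := (inner_apply_self_eq_of_apply_eq_smul hlam hx).symm
      _ ≤ ⟪T u, u⟫ := hmin (by simpa using hu)
      _ = c := inner_apply_self_eq_of_apply_eq_smul hcu hu
  · rintro ⟨lam, hlam, hbottom⟩ y hy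
    -- a minimiser on the sphere is an eigenvector, so its eigenvalue bounds `lam` from above
    obtain ⟨x₀, hx₀, hmin₀⟩ := (isCompact_sphere (0 : E) 1).exists_isMinOn
      ⟨x, by simpa using hx⟩ T.reApplyInnerSelf_continuous.continuousOn
    have hx₀1 : ‖x₀‖ = 1 := by simpa using hx₀
    obtain ⟨c₀, hc₀⟩ := hT.exists_apply_eq_smul_of_isMinOn hx₀1 hmin₀
    calc ⟪T x, x⟫ = lam := inner_apply_self_eq_of_apply_eq_smul hlam hx
      _ ≤ c₀ := hbottom c₀ x₀ (norm_ne_zero_iff.mp (by simp [hx₀1])) hc₀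
      _ = ⟪T x₀, x₀⟫ := (inner_apply_self_eq_of_apply_eq_smul hc₀ hx₀1).symm
      _ ≤ ⟪T y, y⟫ := hmin₀ hy

end Rayleigh

variable {ι : Type*} [Fintype ι]

lemma EuclideanSpace.norm_toLp_eq_one_iff (p : ι → ℝ) : ‖WithLp.toLp 2 p‖ = 1 ↔ p ⬝ᵥ p = 1 := by
  rw [← pow_eq_one_iff_of_nonneg (norm_nonneg _) two_ne_zero, ← real_inner_self_eq_norm_sq,
    EuclideanSpace.inner_toLp_toLp, star_trivial]

lemma Matrix.IsHermitian.forall_dotProduct_mulVec_le_iff [DecidableEq ι] {A : Matrix ι ι ℝ}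
    (hA : A.IsHermitian) {v : ι → ℝ} (hv : v ⬝ᵥ v = 1) :
    (∀ p : ι → ℝ, p ⬝ᵥ p = 1 → v ⬝ᵥ A *ᵥ v ≤ p ⬝ᵥ A *ᵥ p) ↔
      ∃ lam : ℝ, A *ᵥ v = lam • v ∧ ∀ (c : ℝ) (w : ι → ℝ), w ≠ 0 → A *ᵥ w = c • w → lam ≤ c := by
  have hT : IsSelfAdjoint (toEuclideanCLM (𝕜 := ℝ) A) := hA.isSelfAdjoint.map _
  have key := hT.isMinOn_inner_sphere_iff ((EuclideanSpace.norm_toLp_eq_one_iff v).mpr hv)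
  simpa [isMinOn_iff, (WithLp.toLp_surjective 2).forall, EuclideanSpace.norm_toLp_eq_one_iff,
    ← WithLp.toLp_smul, EuclideanSpace.inner_toLp_toLp] using key

lemma trace_vecMulVec_sub_vecMulVec_mul_self {R : Type*} [CommRing R] {p x : ι → R}
    (hp : p ⬝ᵥ p = 1) (hx : x ⬝ᵥ x = 1) :
    trace ((vecMulVec p p - vecMulVec x x) * (vecMulVec p p - vecMulVec x x)) =
      2 - 2 * (p ⬝ᵥ x) ^ 2 := by
  simp only [sub_mul, mul_sub, trace_sub, vecMulVec_mul_vecMulVec, trace_vecMulVec,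
    dotProduct_smul, smul_eq_mul, hp, hx, dotProduct_comm x p]
  ring

section Integral

variable {α : Type*} [MeasurableSpace α] {Q : Measure α}

lemma integrable_dotProduct_mulVec {M : α → Matrix ι ι ℝ}
    (hM : ∀ i j, Integrable (fun a ↦ M a i j) Q) (u w : ι → ℝ) :
    Integrable (fun a ↦ u ⬝ᵥ M a *ᵥ w) Q := by
  simp only [dotProduct, mulVec, Finset.mul_sum]
  exact integrable_finsetSum _ fun i _ ↦ integrable_finsetSum _ fun j _ ↦
    ((hM i j).mul_const (w j)).const_mul (u i)

lemma integral_dotProduct_mulVec {M : α → Matrix ι ι ℝ}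
    (hM : ∀ i j, Integrable (fun a ↦ M a i j) Q) (u w : ι → ℝ) :
    ∫ a, u ⬝ᵥ M a *ᵥ w ∂Q = u ⬝ᵥ (of fun i j ↦ ∫ a, M a i j ∂Q) *ᵥ w := by
  simp only [dotProduct, mulVec, Finset.mul_sum, of_apply]
  rw [integral_finsetSum _ fun i _ ↦ integrable_finsetSum _ fun j _ ↦
    ((hM i j).mul_const (w j)).const_mul (u i)]
  refine Finset.sum_congr rfl fun i _ ↦ ?_
  rw [integral_finsetSum _ fun j _ ↦ ((hM i j).mul_const (w j)).const_mul (u i)]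
  simp only [integral_const_mul, integral_mul_const]

end Integral

lemma abs_apply_le_one_of_dotProduct_self_eq_one {x : ι → ℝ} (hx : x ⬝ᵥ x = 1) (i : ι) :
    |x i| ≤ 1 :=
  abs_le_one_iff_mul_self_le_one.mpr <| hx ▸
    Finset.single_le_sum (fun k _ ↦ mul_self_nonneg (x k)) (Finset.mem_univ i)

variable (Q : Measure {x : ι → ℝ // x ⬝ᵥ x = 1})

lemma integrable_vecMulVec_self_apply [IsFiniteMeasure Q] (i j : ι) :
    Integrable (fun x : {x : ι → ℝ // x ⬝ᵥ x = 1} ↦ vecMulVec x.1 x.1 i j) Q := by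
  refine .of_bound (by fun_prop) 1 (.of_forall fun x ↦ ?_)
  rw [vecMulVec_apply, Real.norm_eq_abs, abs_mul]
  exact mul_le_one₀ (abs_apply_le_one_of_dotProduct_self_eq_one x.2 i) (abs_nonneg _)
    (abs_apply_le_one_of_dotProduct_self_eq_one x.2 j)

lemma integral_trace_vecMulVec_sub_vecMulVec_mul_self [IsProbabilityMeasure Q] {μ : Matrix ι ι ℝ}
    (hμ : ∀ i j, μ i j = ∫ x, (x : {x : ι → ℝ // x ⬝ᵥ x = 1}).1 i * x.1 j ∂Q)
    {p : ι → ℝ} (hp : p ⬝ᵥ p = 1) :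
    ∫ x, trace ((vecMulVec p p - vecMulVec x.1 x.1) * (vecMulVec p p - vecMulVec x.1 x.1)) ∂Q =
      2 - 2 * (p ⬝ᵥ μ *ᵥ p) := by
  have hsq : ∀ x : ι → ℝ, (p ⬝ᵥ x) ^ 2 = p ⬝ᵥ vecMulVec x x *ᵥ p := fun x ↦ by
    rw [vecMulVec_mulVec, op_smul_eq_smul, dotProduct_smul, smul_eq_mul, dotProduct_comm, sq]
  have hμ' : μ = of fun i j ↦ ∫ x, vecMulVec x.1 x.1 i j ∂Q := by
    ext i j
    simp [hμ, vecMulVec_apply]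
  have hint := integrable_vecMulVec_self_apply Q
  calc _ = ∫ x, 2 - 2 * (p ⬝ᵥ vecMulVec x.1 x.1 *ᵥ p) ∂Q := by
        refine integral_congr_ae (.of_forall fun x ↦ ?_)
        simp only [trace_vecMulVec_sub_vecMulVec_mul_self hp x.2, hsq]
    _ = 2 - 2 * (p ⬝ᵥ μ *ᵥ p) := by
        rw [integral_sub (integrable_const 2) ((integrable_dotProduct_mulVec hint p p).const_mul 2),
          integral_const_mul, integral_dotProduct_mulVec hint, ← hμ']
        simp

/-- Let `Q` be a probability measure on the unit sphere `S^m ⊂ ℝ^{m+1}`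
with second moment matrix `μ = ∫ x xᵀ dQ`. A unit vector `v` maximizes the Fréchet
function `F(p) = ∫ ‖p pᵀ - x xᵀ‖₀² dQ(x)` over unit vectors iff `v` is an eigenvector
of `μ` for its smallest eigenvalue; i.e. the VW antimean set of `Q` on `ℝP^m` is the set
of `[v]` with `v` a unit vector in the bottom eigenspace of `μ`. -/
theorem vw_antimean_set (m : ℕ)
    (Q : Measure {x : Fin (m + 1) → ℝ // x ⬝ᵥ x = 1}) [IsProbabilityMeasure Q]
    (μ : Matrix (Fin (m + 1)) (Fin (m + 1)) ℝ)
    (hμ : ∀ i j, μ i j = ∫ x, (x : {x : Fin (m + 1) → ℝ // x ⬝ᵥ x = 1}).1 i * x.1 j ∂Q)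
    (v : Fin (m + 1) → ℝ) (hv : v ⬝ᵥ v = 1) :
    (∀ p : Fin (m + 1) → ℝ, p ⬝ᵥ p = 1 →
        (∫ x, Matrix.trace ((vecMulVec p p - vecMulVec x.1 x.1) *
            (vecMulVec p p - vecMulVec x.1 x.1)) ∂Q)
          ≤ ∫ x, Matrix.trace ((vecMulVec v v - vecMulVec x.1 x.1) *
            (vecMulVec v v - vecMulVec x.1 x.1)) ∂Q) ↔
    (∃ lam : ℝ, μ *ᵥ v = lam • v ∧
      ∀ (c : ℝ) (w : Fin (m + 1) → ℝ), w ≠ 0 → μ *ᵥ w = c • w → lam ≤ c) := by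
  have hμH : μ.IsHermitian := by
    ext i j
    simp [hμ, mul_comm]
  rw [← hμH.forall_dotProduct_mulVec_le_iff hv]
  refine forall₂_congr fun p hp ↦ ?_
  rw [integral_trace_vecMulVec_sub_vecMulVec_mul_self Q hμ hp,
    integral_trace_vecMulVec_sub_vecMulVec_mul_self Q hμ hv]
  constructor <;> intro h <;> linarith
end

section
/- Let x₁, …, x_n be unit vectors in ℝ^{m+1} and let J = n⁻¹ Σ_{i=1}^n x_i x_iᵀ. Then a unit vector g maximizes the empirical Fréchet function F_n(p) = n⁻¹ Σ_{i=1}^n ‖p pᵀ − x_i x_iᵀ‖₀² over unit vectors p if and only if g is an eigenvector of J for its smallest eigenvalue d(1). If moreover d(1) is simple with unit eigenvector g(1), the maximizer set is exactly {g(1), −g(1)}, i.e., the VW sample antimean is a·x̄_{j,E} = [g(1)] ∈ ℝP^m. -/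
/-!
For unit vectors, `‖p pᵀ - x xᵀ‖₀² = 2 - 2 (x ⬝ p)²`, so the empirical Fréchet function equals a
constant minus twice the quadratic form `p ↦ p ⬝ J p`: its maximizers on the sphere are the
minimizers of the Rayleigh quotient of `J`. If `d` is the least eigenvalue of the symmetric matrix
`J`, then `J - d • 1` is positive semidefinite, so `p ⬝ J p ≥ d` on the sphere, with equality
exactly when `(J - d • 1) p = 0`. When that eigenspace is a line `ℝ g`, its unit vectors are `±g`.
-/

open Matrix

namespace Matrix

variable {n : Type*} [Fintype n]

theorem trace_mul_self_vecMulVec_self_sub {R : Type*} [CommRing R] (p x : n → R) :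
    trace ((vecMulVec p p - vecMulVec x x) * (vecMulVec p p - vecMulVec x x)) =
      (p ⬝ᵥ p) ^ 2 + (x ⬝ᵥ x) ^ 2 - 2 * (x ⬝ᵥ p) ^ 2 := by
  simp only [sub_mul, mul_sub, trace_sub, vecMulVec_mul_vecMulVec, trace_vecMulVec,
    dotProduct_smul, smul_eq_mul, dotProduct_comm p x]
  ring

theorem dotProduct_sum_vecMulVec_self_mulVec {ι R : Type*} [Fintype ι] [CommRing R]
    (x : ι → n → R) (p : n → R) :
    p ⬝ᵥ (∑ i, vecMulVec (x i) (x i)) *ᵥ p = ∑ i, (x i ⬝ᵥ p) ^ 2 := by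
  simp only [sum_mulVec, dotProduct_sum, vecMulVec_mulVec, op_smul_eq_smul, dotProduct_smul,
    smul_eq_mul]
  exact Finset.sum_congr rfl fun i _ => by rw [dotProduct_comm, sq]

section Frechet

variable {ι : Type*} [Fintype ι] {x : ι → n → ℝ}

theorem mul_sum_trace_mul_self_vecMulVec_self_sub (c : ℝ) (hx : ∀ i, x i ⬝ᵥ x i = 1)
    {p : n → ℝ} (hp : p ⬝ᵥ p = 1) :
    c * ∑ i, trace ((vecMulVec p p - vecMulVec (x i) (x i)) *
        (vecMulVec p p - vecMulVec (x i) (x i))) =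
      2 * (c * Fintype.card ι) - 2 * (p ⬝ᵥ (c • ∑ i, vecMulVec (x i) (x i)) *ᵥ p) := by
  simp only [trace_mul_self_vecMulVec_self_sub, hp, hx, smul_mulVec, dotProduct_smul,
    dotProduct_sum_vecMulVec_self_mulVec, smul_eq_mul]
  rw [Finset.sum_sub_distrib, Finset.sum_const, Finset.card_univ, ← Finset.mul_sum]
  simp only [nsmul_eq_mul]
  ring

theorem mul_sum_trace_mul_self_vecMulVec_self_sub_le_iff {c : ℝ} (hx : ∀ i, x i ⬝ᵥ x i = 1)
    {J : Matrix n n ℝ} (hJ : J = c • ∑ i, vecMulVec (x i) (x i)) {p g : n → ℝ}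
    (hp : p ⬝ᵥ p = 1) (hg : g ⬝ᵥ g = 1) :
    c * ∑ i, trace ((vecMulVec p p - vecMulVec (x i) (x i)) *
        (vecMulVec p p - vecMulVec (x i) (x i))) ≤
      c * ∑ i, trace ((vecMulVec g g - vecMulVec (x i) (x i)) *
        (vecMulVec g g - vecMulVec (x i) (x i))) ↔
      g ⬝ᵥ J *ᵥ g ≤ p ⬝ᵥ J *ᵥ p := by
  rw [mul_sum_trace_mul_self_vecMulVec_self_sub c hx hp,
    mul_sum_trace_mul_self_vecMulVec_self_sub c hx hg, ← hJ]
  constructor <;> intro h <;> linarith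

end Frechet

theorem exists_smul_dotProduct_self_eq_one {w : n → ℝ} (hw : w ≠ 0) :
    ∃ t : ℝ, (t • w) ⬝ᵥ (t • w) = 1 := by
  have hpos : 0 < w ⬝ᵥ w :=
    lt_of_le_of_ne (Fintype.sum_nonneg fun i => mul_self_nonneg (w i))
      (Ne.symm (dotProduct_self_eq_zero.not.mpr hw))
  refine ⟨(√(w ⬝ᵥ w))⁻¹, ?_⟩
  rw [smul_dotProduct, dotProduct_smul, smul_eq_mul, smul_eq_mul, ← mul_assoc, ← sq, inv_pow,
    Real.sq_sqrt hpos.le, inv_mul_cancel₀ hpos.ne']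

theorem setOf_unit_eigenvector_of_least_eq_pair {J : Matrix n n ℝ} {d : ℝ} {g : n → ℝ}
    (hg : g ⬝ᵥ g = 1) (hJg : J *ᵥ g = d • g)
    (hd : ∀ (c : ℝ) (w : n → ℝ), w ≠ 0 → J *ᵥ w = c • w → d ≤ c)
    (hsimple : ∀ w : n → ℝ, J *ᵥ w = d • w → ∃ c : ℝ, w = c • g) :
    {p : n → ℝ | p ⬝ᵥ p = 1 ∧ ∃ d' : ℝ, J *ᵥ p = d' • p ∧
      ∀ (c : ℝ) (w : n → ℝ), w ≠ 0 → J *ᵥ w = c • w → d' ≤ c} = {g, -g} := by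
  ext p
  constructor
  · rintro ⟨hp, d', hJp, hd'⟩
    have hg0 : g ≠ 0 := by rintro rfl; simp at hg
    have hp0 : p ≠ 0 := by rintro rfl; simp at hp
    have hdd : d' = d := le_antisymm (hd' d g hg0 hJg) (hd d' p hp0 hJp)
    obtain ⟨c, rfl⟩ := hsimple p (hdd ▸ hJp)
    have hc : c * c = 1 := by
      simpa [smul_dotProduct, dotProduct_smul, hg, mul_assoc] using hp
    rcases mul_self_eq_one_iff.mp hc with rfl | rfl
    · exact .inl (one_smul ℝ g)
    · exact .inr (neg_one_smul ℝ g)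
  · rintro (rfl | rfl)
    · exact ⟨hg, d, hJg, hd⟩
    · exact ⟨by simpa using hg, d, by rw [mulVec_neg, hJg, smul_neg], hd⟩

section Hermitian

variable [DecidableEq n] {J : Matrix n n ℝ}

theorem dotProduct_sub_smul_one_mulVec (d : ℝ) (w : n → ℝ) :
    w ⬝ᵥ (J - d • 1) *ᵥ w = w ⬝ᵥ J *ᵥ w - d * (w ⬝ᵥ w) := by
  rw [sub_mulVec, smul_mulVec, one_mulVec, dotProduct_sub, dotProduct_smul, smul_eq_mul]

theorem IsHermitian.posSemidef_sub_smul_one_s10 (hJ : J.IsHermitian) {d : ℝ}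
    (hd : ∀ (c : ℝ) (w : n → ℝ), w ≠ 0 → J *ᵥ w = c • w → d ≤ c) :
    (J - d • 1).PosSemidef := by
  have hS : (J - d • 1).IsHermitian := hJ.sub (isHermitian_one.smul (IsSelfAdjoint.all d))
  refine hS.posSemidef_iff_eigenvalues_nonneg.mpr fun k => ?_
  set v : n → ℝ := ⇑(hS.eigenvectorBasis k)
  have hv : v ≠ 0 := fun h =>
    (hS.eigenvectorBasis.orthonormal.ne_zero k) (WithLp.ofLp_injective 2 h)
  have hJv : J *ᵥ v = (hS.eigenvalues k + d) • v := by
    have := hS.mulVec_eigenvectorBasis k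
    rw [sub_mulVec, smul_mulVec, one_mulVec, sub_eq_iff_eq_add] at this
    rw [this, add_smul]
  simpa using hd _ v hv hJv

theorem IsHermitian.le_dotProduct_mulVec (hJ : J.IsHermitian) {d : ℝ}
    (hd : ∀ (c : ℝ) (w : n → ℝ), w ≠ 0 → J *ᵥ w = c • w → d ≤ c) (w : n → ℝ) :
    d * (w ⬝ᵥ w) ≤ w ⬝ᵥ J *ᵥ w := by
  have := (hJ.posSemidef_sub_smul_one_s10 hd).dotProduct_mulVec_nonneg w
  rw [star_trivial, dotProduct_sub_smul_one_mulVec] at this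
  linarith

theorem IsHermitian.isMin_dotProduct_mulVec_iff (hJ : J.IsHermitian) {g : n → ℝ}
    (hg : g ⬝ᵥ g = 1) :
    (∀ p : n → ℝ, p ⬝ᵥ p = 1 → g ⬝ᵥ J *ᵥ g ≤ p ⬝ᵥ J *ᵥ p) ↔
      ∃ d : ℝ, J *ᵥ g = d • g ∧
        ∀ (c : ℝ) (w : n → ℝ), w ≠ 0 → J *ᵥ w = c • w → d ≤ c := by
  constructor
  · intro hmin
    set d := g ⬝ᵥ J *ᵥ g
    have hd : ∀ (c : ℝ) (w : n → ℝ), w ≠ 0 → J *ᵥ w = c • w → d ≤ c := by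
      intro c w hw hJw
      obtain ⟨t, ht⟩ := exists_smul_dotProduct_self_eq_one hw
      simpa [mulVec_smul, hJw, smul_comm t c, ht] using hmin (t • w) ht
    have hzero : (J - d • 1) *ᵥ g = 0 := by
      rw [← (hJ.posSemidef_sub_smul_one_s10 hd).dotProduct_mulVec_zero_iff, star_trivial,
        dotProduct_sub_smul_one_mulVec, hg, mul_one, sub_self]
    refine ⟨d, ?_, hd⟩
    rwa [sub_mulVec, smul_mulVec, one_mulVec, sub_eq_zero] at hzero
  · rintro ⟨d, hJg, hd⟩ p hp
    calc g ⬝ᵥ J *ᵥ g = d := by rw [hJg, dotProduct_smul, hg, smul_eq_mul, mul_one]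
      _ = d * (p ⬝ᵥ p) := by rw [hp, mul_one]
      _ ≤ p ⬝ᵥ J *ᵥ p := hJ.le_dotProduct_mulVec hd p

end Hermitian

end Matrix

theorem vw_sample_antimean_general (m n : ℕ)
    (x : Fin n → Fin (m + 1) → ℝ) (hx : ∀ i, x i ⬝ᵥ x i = 1)
    (J : Matrix (Fin (m + 1)) (Fin (m + 1)) ℝ)
    (hJ : J = (n : ℝ)⁻¹ • ∑ i, vecMulVec (x i) (x i)) :
    (∀ g : Fin (m + 1) → ℝ, g ⬝ᵥ g = 1 →
      ((∀ p : Fin (m + 1) → ℝ, p ⬝ᵥ p = 1 →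
          (n : ℝ)⁻¹ * ∑ i, Matrix.trace ((vecMulVec p p - vecMulVec (x i) (x i)) *
              (vecMulVec p p - vecMulVec (x i) (x i)))
            ≤ (n : ℝ)⁻¹ * ∑ i, Matrix.trace ((vecMulVec g g - vecMulVec (x i) (x i)) *
              (vecMulVec g g - vecMulVec (x i) (x i)))) ↔
        (∃ d : ℝ, J *ᵥ g = d • g ∧
          ∀ (c : ℝ) (w : Fin (m + 1) → ℝ), w ≠ 0 → J *ᵥ w = c • w → d ≤ c))) ∧
    (∀ (d : ℝ) (g1 : Fin (m + 1) → ℝ), g1 ⬝ᵥ g1 = 1 → J *ᵥ g1 = d • g1 →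
      (∀ (c : ℝ) (w : Fin (m + 1) → ℝ), w ≠ 0 → J *ᵥ w = c • w → d ≤ c) →
      (∀ w : Fin (m + 1) → ℝ, J *ᵥ w = d • w → ∃ c : ℝ, w = c • g1) →
      {p : Fin (m + 1) → ℝ | p ⬝ᵥ p = 1 ∧ ∀ r : Fin (m + 1) → ℝ, r ⬝ᵥ r = 1 →
          (n : ℝ)⁻¹ * ∑ i, Matrix.trace ((vecMulVec r r - vecMulVec (x i) (x i)) *
              (vecMulVec r r - vecMulVec (x i) (x i)))
            ≤ (n : ℝ)⁻¹ * ∑ i, Matrix.trace ((vecMulVec p p - vecMulVec (x i) (x i)) *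
              (vecMulVec p p - vecMulVec (x i) (x i)))} = {g1, -g1}) := by
  have hJherm : J.IsHermitian := by
    have hxx (i : Fin n) : (vecMulVec (x i) (x i)).IsHermitian := by
      simpa using (posSemidef_vecMulVec_self_star (x i)).isHermitian
    rw [hJ]
    exact IsHermitian.smul (isSelfAdjoint_sum Finset.univ fun i _ => hxx i) (IsSelfAdjoint.all _)
  have hmax (g : Fin (m + 1) → ℝ) (hg : g ⬝ᵥ g = 1) :=
    (forall₂_congr fun (p : Fin (m + 1) → ℝ) (hp : p ⬝ᵥ p = 1) =>
      mul_sum_trace_mul_self_vecMulVec_self_sub_le_iff hx hJ hp hg).trans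
        (hJherm.isMin_dotProduct_mulVec_iff hg)
  refine ⟨hmax, fun d g1 hg1 hJg1 hd hsimple => ?_⟩
  rw [← setOf_unit_eigenvector_of_least_eq_pair hg1 hJg1 hd hsimple]
  exact Set.ext fun p => and_congr_right (hmax p)

/-- Let `x₁, …, xₙ` be unit vectors in `ℝ^{m+1}` and
`J = n⁻¹ Σᵢ xᵢ xᵢᵀ`. A unit vector `g` maximizes the empirical Fréchet function
`Fₙ(p) = n⁻¹ Σᵢ ‖p pᵀ - xᵢ xᵢᵀ‖₀²` over unit vectors iff `g` is an eigenvector of `J`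
for its smallest eigenvalue `d(1)`; if moreover `d(1)` is simple with unit eigenvector
`g(1)`, the maximizer set is exactly `{g(1), -g(1)}` (the VW sample antimean is
`[g(1)]`). -/
theorem vw_sample_antimean (m n : ℕ) (hn : 0 < n)
    (x : Fin n → Fin (m + 1) → ℝ) (hx : ∀ i, x i ⬝ᵥ x i = 1)
    (J : Matrix (Fin (m + 1)) (Fin (m + 1)) ℝ)
    (hJ : J = (n : ℝ)⁻¹ • ∑ i, vecMulVec (x i) (x i)) :
    (∀ g : Fin (m + 1) → ℝ, g ⬝ᵥ g = 1 →
      ((∀ p : Fin (m + 1) → ℝ, p ⬝ᵥ p = 1 →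
          (n : ℝ)⁻¹ * ∑ i, Matrix.trace ((vecMulVec p p - vecMulVec (x i) (x i)) *
              (vecMulVec p p - vecMulVec (x i) (x i)))
            ≤ (n : ℝ)⁻¹ * ∑ i, Matrix.trace ((vecMulVec g g - vecMulVec (x i) (x i)) *
              (vecMulVec g g - vecMulVec (x i) (x i)))) ↔
        (∃ d : ℝ, J *ᵥ g = d • g ∧
          ∀ (c : ℝ) (w : Fin (m + 1) → ℝ), w ≠ 0 → J *ᵥ w = c • w → d ≤ c))) ∧
    (∀ (d : ℝ) (g1 : Fin (m + 1) → ℝ), g1 ⬝ᵥ g1 = 1 → J *ᵥ g1 = d • g1 →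
      (∀ (c : ℝ) (w : Fin (m + 1) → ℝ), w ≠ 0 → J *ᵥ w = c • w → d ≤ c) →
      (∀ w : Fin (m + 1) → ℝ, J *ᵥ w = d • w → ∃ c : ℝ, w = c • g1) →
      {p : Fin (m + 1) → ℝ | p ⬝ᵥ p = 1 ∧ ∀ r : Fin (m + 1) → ℝ, r ⬝ᵥ r = 1 →
          (n : ℝ)⁻¹ * ∑ i, Matrix.trace ((vecMulVec r r - vecMulVec (x i) (x i)) *
              (vecMulVec r r - vecMulVec (x i) (x i)))
            ≤ (n : ℝ)⁻¹ * ∑ i, Matrix.trace ((vecMulVec p p - vecMulVec (x i) (x i)) *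
              (vecMulVec p p - vecMulVec (x i) (x i)))} = {g1, -g1}) :=
  vw_sample_antimean_general m n x hx J hJ
end

section
/- Let Q be a probability measure on the unit sphere of ℂ^{k−1} and let μ = ∫ z z* Q(dz) be the (k−1)×(k−1) Hermitian second moment matrix. Then a unit vector w ∈ ℂ^{k−1} maximizes the Fréchet function F(w) = ∫ ‖w w* − z z*‖₀² Q(dz) over unit vectors if and only if w is an eigenvector of μ corresponding to its smallest eigenvalue λ. Moreover, the maximizer is unique up to multiplication by a unit complex scalar — i.e., Q is α-VW-nonfocal with VW antimean αμ_{j,E}(Q) = [m] ∈ ℂP^{k−2}, where m is a unit eigenvector of μ for λ — if and only if λ is a simple eigenvalue of μ. -/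
open Matrix MeasureTheory

/-!
For unit vectors `u`, `z` one has `‖u u* - z z*‖₀² = 2 - 2 |u* z|²`, so integrating against `Q`
gives `F(u) = 2 - 2 u* μ u`: maximizing the Fréchet function on the unit sphere is minimizing the
Rayleigh quotient of the Hermitian matrix `μ`. A real `λ` bounds the eigenvalues of `μ` from below
iff `μ - λ I` is positive semidefinite; then `u* μ u ≥ λ` on the unit sphere, with equality iff
`u* (μ - λ I) u = 0`, i.e. iff `μ u = λ u`. So the maximizers are the unit vectors of the eigenspace
of the least eigenvalue, and they form a single circle `{ζ m : |ζ| = 1}` iff that eigenspace is the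
line through `m`.
-/

open scoped ComplexOrder

variable {n 𝕜 : Type*} [Fintype n] [RCLike 𝕜]

namespace Matrix

lemma star_dotProduct_self_eq_norm_sq (v : n → 𝕜) :
    star v ⬝ᵥ v = (‖WithLp.toLp 2 v‖ : 𝕜) ^ 2 := by
  rw [dotProduct_comm, ← EuclideanSpace.inner_toLp_toLp, inner_self_eq_norm_sq_to_K]

lemma star_dotProduct_self_eq_one_iff {v : n → 𝕜} :
    star v ⬝ᵥ v = 1 ↔ ‖WithLp.toLp 2 v‖ = 1 := by
  rw [star_dotProduct_self_eq_norm_sq]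
  norm_cast
  exact pow_eq_one_iff_of_nonneg (norm_nonneg _) two_ne_zero

lemma ne_zero_of_star_dotProduct_self_eq_one {v : n → 𝕜} (hv : star v ⬝ᵥ v = 1) : v ≠ 0 := by
  rintro rfl
  simp at hv

lemma re_star_dotProduct_self_pos {v : n → 𝕜} (hv : v ≠ 0) : 0 < RCLike.re (star v ⬝ᵥ v) := by
  rw [star_dotProduct_self_eq_norm_sq]
  norm_cast
  have : WithLp.toLp 2 v ≠ 0 := by simpa using hv
  positivity

lemma setOf_unit_mem_eq_circle_smul_iff {E : Submodule 𝕜 (n → 𝕜)} {m : n → 𝕜}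
    (hm : star m ⬝ᵥ m = 1) (hmE : m ∈ E) :
    {w | star w ⬝ᵥ w = 1 ∧ w ∈ E} = {w | ∃ ζ : 𝕜, ‖ζ‖ = 1 ∧ w = ζ • m} ↔
      ∀ v ∈ E, ∃ c : 𝕜, v = c • m := by
  rw [star_dotProduct_self_eq_one_iff] at hm
  simp only [star_dotProduct_self_eq_one_iff]
  constructor
  · intro hset v hv
    by_cases hv0 : v = 0
    · exact ⟨0, by simp [hv0]⟩
    have hv0' : WithLp.toLp 2 v ≠ 0 := by simpa using hv0
    obtain ⟨ζ, -, hζ⟩ : (‖WithLp.toLp 2 v‖⁻¹ : 𝕜) • v ∈ {w | ∃ ζ : 𝕜, ‖ζ‖ = 1 ∧ w = ζ • m} := by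
      rw [← hset]
      exact ⟨by simpa using norm_smul_inv_norm hv0', E.smul_mem _ hv⟩
    refine ⟨‖WithLp.toLp 2 v‖ * ζ, ?_⟩
    rw [mul_smul, ← hζ, smul_inv_smul₀ (by simpa using hv0')]
  · intro hE
    ext w
    constructor
    · rintro ⟨hw, hwE⟩
      obtain ⟨c, rfl⟩ := hE w hwE
      refine ⟨c, ?_, rfl⟩
      simpa [norm_smul, hm] using hw
    · rintro ⟨ζ, hζ, rfl⟩
      exact ⟨by simp [norm_smul, hζ, hm], E.smul_mem _ hmE⟩

lemma star_dotProduct_mul_star_dotProduct (u z : n → 𝕜) :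
    (star u ⬝ᵥ z) * (star z ⬝ᵥ u) = ∑ i, ∑ j, star (u i) * (z i * star (z j)) * u j := by
  simp only [dotProduct, Finset.sum_mul_sum, Pi.star_apply]
  exact Finset.sum_congr rfl fun i _ => Finset.sum_congr rfl fun j _ => by ring

lemma trace_sub_vecMulVec_mul_conjTranspose {u z : n → 𝕜} (hu : star u ⬝ᵥ u = 1)
    (hz : star z ⬝ᵥ z = 1) :
    trace ((vecMulVec u (star u) - vecMulVec z (star z)) *
        (vecMulVec u (star u) - vecMulVec z (star z))ᴴ) =
      2 - 2 * ((star u ⬝ᵥ z) * (star z ⬝ᵥ u)) := by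
  simp only [conjTranspose_sub, conjTranspose_vecMulVec, star_star, sub_mul, mul_sub,
    vecMulVec_mul_vecMulVec, trace_sub, trace_vecMulVec, dotProduct_smul, smul_eq_mul]
  rw [dotProduct_comm u (star u), dotProduct_comm z (star u), dotProduct_comm u (star z),
    dotProduct_comm z (star z), hu, hz]
  ring

variable [DecidableEq n] {A : Matrix n n 𝕜} {lam : ℝ}

lemma star_dotProduct_sub_smul_one_mulVec (a : 𝕜) (v : n → 𝕜) :
    star v ⬝ᵥ ((A - a • 1) *ᵥ v) = star v ⬝ᵥ (A *ᵥ v) - a * (star v ⬝ᵥ v) := by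
  simp [sub_mulVec, smul_mulVec, dotProduct_sub, dotProduct_smul]

lemma PosSemidef.le_of_mulVec_eq_smul (h : (A - (lam : 𝕜) • 1).PosSemidef) {c : ℝ}
    {v : n → 𝕜} (hv : v ≠ 0) (he : A *ᵥ v = (c : 𝕜) • v) : lam ≤ c := by
  have h0 := h.re_dotProduct_nonneg v
  rw [star_dotProduct_sub_smul_one_mulVec, he, dotProduct_smul, smul_eq_mul, ← sub_mul,
    ← RCLike.ofReal_sub, RCLike.re_ofReal_mul] at h0
  exact sub_nonneg.mp (nonneg_of_mul_nonneg_left h0 (re_star_dotProduct_self_pos hv))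

lemma PosSemidef.le_re_star_dotProduct_mulVec (h : (A - (lam : 𝕜) • 1).PosSemidef) {v : n → 𝕜}
    (hv : star v ⬝ᵥ v = 1) : lam ≤ RCLike.re (star v ⬝ᵥ (A *ᵥ v)) := by
  have h0 := h.re_dotProduct_nonneg v
  rw [star_dotProduct_sub_smul_one_mulVec, hv, mul_one, map_sub, RCLike.ofReal_re] at h0
  linarith

lemma PosSemidef.mulVec_eq_smul_of_re_eq (h : (A - (lam : 𝕜) • 1).PosSemidef) {v : n → 𝕜}
    (hv : star v ⬝ᵥ v = 1) (heq : RCLike.re (star v ⬝ᵥ (A *ᵥ v)) = lam) :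
    A *ᵥ v = (lam : 𝕜) • v := by
  -- a positive semidefinite form takes real values, so a vanishing real part means it vanishes
  have him := (RCLike.nonneg_iff.mp (h.dotProduct_mulVec_nonneg v)).2
  have hzero : star v ⬝ᵥ ((A - (lam : 𝕜) • 1) *ᵥ v) = 0 := by
    refine RCLike.ext ?_ (by simpa using him)
    rw [star_dotProduct_sub_smul_one_mulVec, hv, mul_one, map_sub, RCLike.ofReal_re, heq]
    simp
  rwa [h.dotProduct_mulVec_zero_iff, sub_mulVec, smul_mulVec, one_mulVec, sub_eq_zero] at hzero

namespace IsHermitian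

lemma posSemidef_sub_smul_one_of_le_eigenvalues (hA : A.IsHermitian)
    (h : ∀ i, lam ≤ hA.eigenvalues i) : (A - (lam : 𝕜) • 1).PosSemidef := by
  set U : Matrix n n 𝕜 := (hA.eigenvectorUnitary : Matrix n n 𝕜)
  have hU : U * Uᴴ = 1 := Matrix.mem_unitaryGroup_iff.mp hA.eigenvectorUnitary.2
  have hdiag : diagonal (RCLike.ofReal ∘ fun i => hA.eigenvalues i - lam) =
      diagonal (RCLike.ofReal ∘ hA.eigenvalues) - (lam : 𝕜) • (1 : Matrix n n 𝕜) := by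
    rw [← diagonal_one, ← diagonal_smul, diagonal_sub]
    congr 1
    ext i
    simp
  have hdecomp : A - (lam : 𝕜) • 1 =
      U * diagonal (RCLike.ofReal ∘ fun i => hA.eigenvalues i - lam) * Uᴴ := by
    rw [hdiag, mul_sub, sub_mul, mul_smul_comm, mul_one, smul_mul_assoc, hU]
    conv_lhs => rw [hA.spectral_theorem, Unitary.conjStarAlgAut_apply]
    rfl
  rw [hdecomp]
  exact (PosSemidef.diagonal fun i => by simpa using h i).mul_mul_conjTranspose_same U

lemma star_dotProduct_self_eigenvectorBasis (hA : A.IsHermitian) (i : n) :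
    star ⇑(hA.eigenvectorBasis i) ⬝ᵥ ⇑(hA.eigenvectorBasis i) = 1 :=
  star_dotProduct_self_eq_one_iff.mpr (hA.eigenvectorBasis.orthonormal.1 i)

lemma posSemidef_sub_smul_one_iff (hA : A.IsHermitian) :
    (A - (lam : 𝕜) • 1).PosSemidef ↔
      ∀ (c : ℝ) (v : n → 𝕜), v ≠ 0 → A *ᵥ v = (c : 𝕜) • v → lam ≤ c := by
  refine ⟨fun h c v hv he => h.le_of_mulVec_eq_smul hv he, fun h => ?_⟩
  refine hA.posSemidef_sub_smul_one_of_le_eigenvalues fun i => h _ (hA.eigenvectorBasis i)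
    (ne_zero_of_star_dotProduct_self_eq_one (hA.star_dotProduct_self_eigenvectorBasis i)) ?_
  rw [hA.mulVec_eigenvectorBasis, RCLike.real_smul_eq_coe_smul (K := 𝕜)]

theorem isMinOn_re_star_dotProduct_mulVec_iff (hA : A.IsHermitian) {w : n → 𝕜}
    (hw : star w ⬝ᵥ w = 1) :
    IsMinOn (fun u => RCLike.re (star u ⬝ᵥ (A *ᵥ u))) {u | star u ⬝ᵥ u = 1} w ↔
      ∃ lam : ℝ, A *ᵥ w = (lam : 𝕜) • w ∧ (A - (lam : 𝕜) • 1).PosSemidef := by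
  rw [isMinOn_iff]
  constructor
  · intro hmin
    set lam := RCLike.re (star w ⬝ᵥ (A *ᵥ w))
    have hpsd : (A - (lam : 𝕜) • 1).PosSemidef :=
      hA.posSemidef_sub_smul_one_of_le_eigenvalues fun i =>
        (hA.eigenvalues_eq i).symm ▸ hmin _ (hA.star_dotProduct_self_eigenvectorBasis i)
    exact ⟨lam, hpsd.mulVec_eq_smul_of_re_eq hw rfl, hpsd⟩
  · rintro ⟨lam, he, hpsd⟩ u hu
    rw [he, dotProduct_smul, hw, smul_eq_mul, mul_one, RCLike.ofReal_re]
    exact hpsd.le_re_star_dotProduct_mulVec hu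

end IsHermitian

end Matrix

section VeroneseWhitney

variable (Q : Measure {z : n → 𝕜 // star z ⬝ᵥ z = 1})

lemma integrable_coord_mul_star_coord [IsFiniteMeasure Q] (i j : n) :
    Integrable (fun z : {z : n → 𝕜 // star z ⬝ᵥ z = 1} => z.1 i * star (z.1 j)) Q := by
  have hcoord (z : {z : n → 𝕜 // star z ⬝ᵥ z = 1}) (i : n) : ‖z.1 i‖ ≤ 1 := by
    simpa [star_dotProduct_self_eq_one_iff.mp z.2] using
      PiLp.norm_apply_le (WithLp.toLp 2 z.1) i
  have hcont (i : n) : Continuous fun z : {z : n → 𝕜 // star z ⬝ᵥ z = 1} => z.1 i :=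
    (continuous_apply i).comp continuous_subtype_val
  refine Integrable.of_bound ((hcont i).mul (hcont j).star).aestronglyMeasurable 1
    (ae_of_all _ fun z => ?_)
  rw [norm_mul, norm_star]
  exact mul_le_one₀ (hcoord z i) (norm_nonneg _) (hcoord z j)

variable {Q} {μ : Matrix n n 𝕜}

lemma isHermitian_of_eq_integral (hμ : ∀ i j, μ i j = ∫ z, z.1 i * star (z.1 j) ∂Q) :
    μ.IsHermitian := by
  ext i j
  rw [conjTranspose_apply, hμ, hμ, RCLike.star_def, ← integral_conj]
  simp [mul_comm]

lemma star_dotProduct_mulVec_eq_integral [IsFiniteMeasure Q]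
    (hμ : ∀ i j, μ i j = ∫ z, z.1 i * star (z.1 j) ∂Q) (u : n → 𝕜) :
    Integrable (fun z : {z : n → 𝕜 // star z ⬝ᵥ z = 1} => (star u ⬝ᵥ z.1) * (star z.1 ⬝ᵥ u)) Q ∧
      star u ⬝ᵥ (μ *ᵥ u) = ∫ z, (star u ⬝ᵥ z.1) * (star z.1 ⬝ᵥ u) ∂Q := by
  have hint (i j : n) : Integrable (fun z : {z : n → 𝕜 // star z ⬝ᵥ z = 1} =>
      star (u i) * (z.1 i * star (z.1 j)) * u j) Q :=
    ((integrable_coord_mul_star_coord Q i j).const_mul _).mul_const _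
  have hquad : star u ⬝ᵥ (μ *ᵥ u) = ∑ i, ∑ j, star (u i) * μ i j * u j := by
    simp only [dotProduct, mulVec, Finset.mul_sum, Pi.star_apply, mul_assoc]
  simp only [star_dotProduct_mul_star_dotProduct u, hquad]
  refine ⟨integrable_finsetSum _ fun i _ => integrable_finsetSum _ fun j _ => hint i j, ?_⟩
  rw [integral_finsetSum _ fun i _ => integrable_finsetSum _ fun j _ => hint i j]
  refine Finset.sum_congr rfl fun i _ => ?_
  rw [integral_finsetSum _ fun j _ => hint i j]
  refine Finset.sum_congr rfl fun j _ => ?_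
  rw [integral_mul_const, integral_const_mul, hμ]

variable (Q) in
noncomputable def vwFrechet (u : n → 𝕜) : ℝ :=
  ∫ z, RCLike.re (trace ((vecMulVec u (star u) - vecMulVec z.1 (star z.1)) *
    (vecMulVec u (star u) - vecMulVec z.1 (star z.1))ᴴ)) ∂Q

lemma vwFrechet_eq [IsProbabilityMeasure Q] (hμ : ∀ i j, μ i j = ∫ z, z.1 i * star (z.1 j) ∂Q)
    {u : n → 𝕜} (hu : star u ⬝ᵥ u = 1) :
    vwFrechet Q u = 2 - 2 * RCLike.re (star u ⬝ᵥ (μ *ᵥ u)) := by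
  obtain ⟨hint, hμu⟩ := star_dotProduct_mulVec_eq_integral hμ u
  calc vwFrechet Q u
        = ∫ z, RCLike.re ((2 : 𝕜) - 2 * ((star u ⬝ᵥ z.1) * (star z.1 ⬝ᵥ u))) ∂Q := by
        unfold vwFrechet
        congr! 3 with z
        exact trace_sub_vecMulVec_mul_conjTranspose hu z.2
    _ = RCLike.re (∫ z, ((2 : 𝕜) - 2 * ((star u ⬝ᵥ z.1) * (star z.1 ⬝ᵥ u))) ∂Q) :=
        integral_re ((integrable_const 2).sub (hint.const_mul 2))
    _ = 2 - 2 * RCLike.re (star u ⬝ᵥ (μ *ᵥ u)) := by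
        rw [integral_sub (integrable_const 2) (hint.const_mul 2), integral_const_mul, ← hμu]
        simp

lemma isMaxOn_vwFrechet_iff_isMinOn [IsProbabilityMeasure Q]
    (hμ : ∀ i j, μ i j = ∫ z, z.1 i * star (z.1 j) ∂Q) {w : n → 𝕜} (hw : star w ⬝ᵥ w = 1) :
    IsMaxOn (vwFrechet Q) {u | star u ⬝ᵥ u = 1} w ↔
      IsMinOn (fun u => RCLike.re (star u ⬝ᵥ (μ *ᵥ u))) {u | star u ⬝ᵥ u = 1} w := by
  simp only [isMaxOn_iff, isMinOn_iff]
  refine forall₂_congr fun u hu => ?_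
  rw [vwFrechet_eq hμ hu, vwFrechet_eq hμ hw]
  constructor <;> intro h <;> linarith

variable [DecidableEq n]

theorem isMaxOn_vwFrechet_iff [IsProbabilityMeasure Q]
    (hμ : ∀ i j, μ i j = ∫ z, z.1 i * star (z.1 j) ∂Q) {w : n → 𝕜} (hw : star w ⬝ᵥ w = 1) :
    IsMaxOn (vwFrechet Q) {u | star u ⬝ᵥ u = 1} w ↔
      ∃ lam : ℝ, μ *ᵥ w = (lam : 𝕜) • w ∧ (μ - (lam : 𝕜) • 1).PosSemidef :=
  (isMaxOn_vwFrechet_iff_isMinOn hμ hw).trans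
    ((isHermitian_of_eq_integral hμ).isMinOn_re_star_dotProduct_mulVec_iff hw)

theorem isMaxOn_vwFrechet_iff_mulVec_eq_smul [IsProbabilityMeasure Q]
    (hμ : ∀ i j, μ i j = ∫ z, z.1 i * star (z.1 j) ∂Q) {lam : ℝ} {m : n → 𝕜}
    (hm : star m ⬝ᵥ m = 1) (hme : μ *ᵥ m = (lam : 𝕜) • m) (hlam : (μ - (lam : 𝕜) • 1).PosSemidef)
    {w : n → 𝕜} (hw : star w ⬝ᵥ w = 1) :
    IsMaxOn (vwFrechet Q) {u | star u ⬝ᵥ u = 1} w ↔ μ *ᵥ w = (lam : 𝕜) • w := by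
  rw [isMaxOn_vwFrechet_iff hμ hw]
  refine ⟨fun ⟨lam', he, hlam'⟩ => ?_, fun he => ⟨lam, he, hlam⟩⟩
  rwa [le_antisymm (hlam'.le_of_mulVec_eq_smul (ne_zero_of_star_dotProduct_self_eq_one hm) hme)
    (hlam.le_of_mulVec_eq_smul (ne_zero_of_star_dotProduct_self_eq_one hw) he)] at he

end VeroneseWhitney

theorem vw_antimean_complex_general (k : ℕ)
    (Q : Measure {z : Fin (k - 1) → ℂ // star z ⬝ᵥ z = 1}) [IsProbabilityMeasure Q]
    (μ : Matrix (Fin (k - 1)) (Fin (k - 1)) ℂ)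
    (hμ : ∀ i j, μ i j =
      ∫ z, (z : {z : Fin (k - 1) → ℂ // star z ⬝ᵥ z = 1}).1 i * star (z.1 j) ∂Q) :
    (∀ w : Fin (k - 1) → ℂ, star w ⬝ᵥ w = 1 →
      ((∀ u : Fin (k - 1) → ℂ, star u ⬝ᵥ u = 1 →
          (∫ z, (Matrix.trace ((vecMulVec u (star u) - vecMulVec z.1 (star z.1)) *
              (vecMulVec u (star u) - vecMulVec z.1 (star z.1))ᴴ)).re ∂Q)
            ≤ ∫ z, (Matrix.trace ((vecMulVec w (star w) - vecMulVec z.1 (star z.1)) *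
              (vecMulVec w (star w) - vecMulVec z.1 (star z.1))ᴴ)).re ∂Q) ↔
        (∃ lam : ℝ, μ *ᵥ w = (lam : ℂ) • w ∧
          ∀ (c : ℝ) (v : Fin (k - 1) → ℂ), v ≠ 0 → μ *ᵥ v = (c : ℂ) • v → lam ≤ c))) ∧
    (∀ (lam : ℝ) (mv : Fin (k - 1) → ℂ), star mv ⬝ᵥ mv = 1 →
      μ *ᵥ mv = (lam : ℂ) • mv →
      (∀ (c : ℝ) (v : Fin (k - 1) → ℂ), v ≠ 0 → μ *ᵥ v = (c : ℂ) • v → lam ≤ c) →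
      (({w : Fin (k - 1) → ℂ | star w ⬝ᵥ w = 1 ∧ ∀ u : Fin (k - 1) → ℂ, star u ⬝ᵥ u = 1 →
            (∫ z, (Matrix.trace ((vecMulVec u (star u) - vecMulVec z.1 (star z.1)) *
                (vecMulVec u (star u) - vecMulVec z.1 (star z.1))ᴴ)).re ∂Q)
              ≤ ∫ z, (Matrix.trace ((vecMulVec w (star w) - vecMulVec z.1 (star z.1)) *
                (vecMulVec w (star w) - vecMulVec z.1 (star z.1))ᴴ)).re ∂Q}
          = {w : Fin (k - 1) → ℂ | ∃ ζ : ℂ, ‖ζ‖ = 1 ∧ w = ζ • mv}) ↔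
        (∀ v : Fin (k - 1) → ℂ, μ *ᵥ v = (lam : ℂ) • v → ∃ c : ℂ, v = c • mv))) := by
  have hH := isHermitian_of_eq_integral hμ
  refine ⟨fun w hw => ?_, fun lam mv hmv hme hmin => ?_⟩
  · exact (isMaxOn_vwFrechet_iff hμ hw).trans
      (exists_congr fun _ => and_congr_right fun _ => hH.posSemidef_sub_smul_one_iff)
  · have hmaximizers : {w : Fin (k - 1) → ℂ | star w ⬝ᵥ w = 1 ∧
        IsMaxOn (vwFrechet Q) {u | star u ⬝ᵥ u = 1} w} =
          {w | star w ⬝ᵥ w = 1 ∧ w ∈ Module.End.eigenspace (toLin' μ) lam} := by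
      ext w
      simp only [Set.mem_ofPred_eq, Module.End.mem_eigenspace_iff, toLin'_apply,
        and_congr_right_iff]
      exact isMaxOn_vwFrechet_iff_mulVec_eq_smul hμ hmv hme (hH.posSemidef_sub_smul_one_iff.mpr hmin)
    have hmE : mv ∈ Module.End.eigenspace (toLin' μ) lam := by
      rwa [Module.End.mem_eigenspace_iff, toLin'_apply]
    -- the set of maximizers in the statement is this one with `IsMaxOn` unfolded
    change {w | star w ⬝ᵥ w = 1 ∧ IsMaxOn (vwFrechet Q) {u | star u ⬝ᵥ u = 1} w} = _ ↔ _
    rw [hmaximizers, setOf_unit_mem_eq_circle_smul_iff hmv hmE]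
    simp only [Module.End.mem_eigenspace_iff, toLin'_apply]

/-- Let `Q` be a probability measure on the unit sphere of `ℂ^{k-1}` with
Hermitian second moment matrix `μ = ∫ z z* dQ`. A unit vector `w` maximizes the Fréchet
function `F(w) = ∫ ‖w w* - z z*‖₀² dQ(z)` over unit vectors iff `w` is an eigenvector
of `μ` for its smallest eigenvalue `λ`; and the maximizer is unique up to a unit complex
scalar (i.e. `Q` is α-VW-nonfocal with VW antimean `[m] ∈ ℂP^{k-2}`, `m` a unit
`λ`-eigenvector) iff `λ` is a simple eigenvalue of `μ`. -/
theorem vw_antimean_complex (k : ℕ) (hk : 2 ≤ k)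
    (Q : Measure {z : Fin (k - 1) → ℂ // star z ⬝ᵥ z = 1}) [IsProbabilityMeasure Q]
    (μ : Matrix (Fin (k - 1)) (Fin (k - 1)) ℂ)
    (hμ : ∀ i j, μ i j =
      ∫ z, (z : {z : Fin (k - 1) → ℂ // star z ⬝ᵥ z = 1}).1 i * star (z.1 j) ∂Q) :
    (∀ w : Fin (k - 1) → ℂ, star w ⬝ᵥ w = 1 →
      ((∀ u : Fin (k - 1) → ℂ, star u ⬝ᵥ u = 1 →
          (∫ z, (Matrix.trace ((vecMulVec u (star u) - vecMulVec z.1 (star z.1)) *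
              (vecMulVec u (star u) - vecMulVec z.1 (star z.1))ᴴ)).re ∂Q)
            ≤ ∫ z, (Matrix.trace ((vecMulVec w (star w) - vecMulVec z.1 (star z.1)) *
              (vecMulVec w (star w) - vecMulVec z.1 (star z.1))ᴴ)).re ∂Q) ↔
        (∃ lam : ℝ, μ *ᵥ w = (lam : ℂ) • w ∧
          ∀ (c : ℝ) (v : Fin (k - 1) → ℂ), v ≠ 0 → μ *ᵥ v = (c : ℂ) • v → lam ≤ c))) ∧
    (∀ (lam : ℝ) (mv : Fin (k - 1) → ℂ), star mv ⬝ᵥ mv = 1 →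
      μ *ᵥ mv = (lam : ℂ) • mv →
      (∀ (c : ℝ) (v : Fin (k - 1) → ℂ), v ≠ 0 → μ *ᵥ v = (c : ℂ) • v → lam ≤ c) →
      (({w : Fin (k - 1) → ℂ | star w ⬝ᵥ w = 1 ∧ ∀ u : Fin (k - 1) → ℂ, star u ⬝ᵥ u = 1 →
            (∫ z, (Matrix.trace ((vecMulVec u (star u) - vecMulVec z.1 (star z.1)) *
                (vecMulVec u (star u) - vecMulVec z.1 (star z.1))ᴴ)).re ∂Q)
              ≤ ∫ z, (Matrix.trace ((vecMulVec w (star w) - vecMulVec z.1 (star z.1)) *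
                (vecMulVec w (star w) - vecMulVec z.1 (star z.1))ᴴ)).re ∂Q}
          = {w : Fin (k - 1) → ℂ | ∃ ζ : ℂ, ‖ζ‖ = 1 ∧ w = ζ • mv}) ↔
        (∀ v : Fin (k - 1) → ℂ, μ *ᵥ v = (lam : ℂ) • v → ∃ c : ℂ, v = c • mv))) :=
  vw_antimean_complex_general k Q μ hμ
end

section
/- Let x_r^s, r = 1, …, n, s = 1, …, q, be unit vectors in ℝ^{m+1} representing a sample of n points of (ℝP^m)^q, and let J_s = n⁻¹ Σ_{r=1}^n x_r^s (x_r^s)ᵀ. Suppose that for each s the smallest eigenvalue d_s(1) of J_s is simple with unit eigenvector g_s(1). Then the empirical Fréchet function F_n(p₁,…,p_q) = n⁻¹ Σ_{r=1}^n Σ_{s=1}^q ‖p_s p_sᵀ − x_r^s (x_r^s)ᵀ‖₀² over q-tuples of unit vectors is maximized exactly at the tuples (ε₁ g₁(1), …, ε_q g_q(1)) with ε_s ∈ {+1, −1}; that is, the VW sample antimean is a·Ȳ_{n,E} = ([g₁(1)], …, [g_q(1)]). -/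
open Matrix

lemma trace_vmv_mul {k : ℕ} (a b c e : Fin k → ℝ) :
    Matrix.trace (vecMulVec a b * vecMulVec c e) = (b ⬝ᵥ c) * (e ⬝ᵥ a) := by
  calc Matrix.trace (vecMulVec a b * vecMulVec c e)
      = ∑ i, ∑ j, (a i * b j) * (c j * e i) := by
        simp [Matrix.trace, Matrix.diag, Matrix.mul_apply, vecMulVec_apply]
  _ = (b ⬝ᵥ c) * (e ⬝ᵥ a) := by
        simp only [dotProduct, Finset.sum_mul, Finset.mul_sum]
        exact Finset.sum_congr rfl fun i _ => Finset.sum_congr rfl fun j _ => by ring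

lemma vmv_mulVec {k : ℕ} (b p : Fin k → ℝ) :
    vecMulVec b b *ᵥ p = (b ⬝ᵥ p) • b := by
  funext i
  simp only [mulVec, vecMulVec_apply, dotProduct, Pi.smul_apply, smul_eq_mul,
    Finset.sum_mul]
  exact Finset.sum_congr rfl fun j _ => by ring

lemma sum_mulVec' {k n : ℕ} (M : Fin n → Matrix (Fin k) (Fin k) ℝ) (v : Fin k → ℝ) :
    (∑ r, M r) *ᵥ v = ∑ r, M r *ᵥ v := by
  funext i
  simp only [mulVec, dotProduct, Matrix.sum_apply, Finset.sum_mul, Finset.sum_apply]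
  rw [Finset.sum_comm]

lemma dotProduct_sum' {k n : ℕ} (w : Fin k → ℝ) (f : Fin n → Fin k → ℝ) :
    w ⬝ᵥ (∑ r, f r) = ∑ r, w ⬝ᵥ f r := by
  simp only [dotProduct, Finset.sum_apply, Finset.mul_sum]
  rw [Finset.sum_comm]

lemma trace_quad {k : ℕ} (a b : Fin k → ℝ) (ha : a ⬝ᵥ a = 1) (hb : b ⬝ᵥ b = 1) :
    Matrix.trace ((vecMulVec a a - vecMulVec b b) * (vecMulVec a a - vecMulVec b b))
      = 2 - 2 * (a ⬝ᵥ b) ^ 2 := by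
  rw [sub_mul, mul_sub, mul_sub, Matrix.trace_sub, Matrix.trace_sub, Matrix.trace_sub,
    trace_vmv_mul, trace_vmv_mul, trace_vmv_mul, trace_vmv_mul, ha, hb,
    dotProduct_comm b a]
  ring

lemma rayleigh_min {k : ℕ} (A : Matrix (Fin k) (Fin k) ℝ) (hA : A.IsHermitian) (d : ℝ)
    (hmin : ∀ (c : ℝ) (w : Fin k → ℝ), w ≠ 0 → A *ᵥ w = c • w → d ≤ c)
    (w : Fin k → ℝ) (hw : w ⬝ᵥ w = 1) :
    d ≤ w ⬝ᵥ (A *ᵥ w) ∧ (w ⬝ᵥ (A *ᵥ w) = d → A *ᵥ w = d • w) := by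
  classical
  set b : Fin k → Fin k → ℝ := fun j => ⇑(hA.eigenvectorBasis j) with hb
  set lam : Fin k → ℝ := hA.eigenvalues with hlam
  have hU : (hA.eigenvectorUnitary : Matrix (Fin k) (Fin k) ℝ) *
      star (hA.eigenvectorUnitary : Matrix (Fin k) (Fin k) ℝ) = 1 :=
    (Matrix.mem_unitaryGroup_iff).mp hA.eigenvectorUnitary.2
  have hU' : star (hA.eigenvectorUnitary : Matrix (Fin k) (Fin k) ℝ) *
      (hA.eigenvectorUnitary : Matrix (Fin k) (Fin k) ℝ) = 1 :=
    (Matrix.mem_unitaryGroup_iff').mp hA.eigenvectorUnitary.2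
  have horth : ∀ i l : Fin k, (∑ j, b j i * b j l) = if i = l then 1 else 0 := by
    intro i l
    have := congrFun (congrFun hU i) l
    simpa [Matrix.mul_apply, Matrix.one_apply, hb, Matrix.conjTranspose_apply] using this
  have hnorm : ∀ j : Fin k, b j ⬝ᵥ b j = 1 := by
    intro j
    have := congrFun (congrFun hU' j) j
    simpa [Matrix.mul_apply, Matrix.one_apply, hb, Matrix.conjTranspose_apply,
      dotProduct] using this
  have hbne : ∀ j : Fin k, b j ≠ 0 := by
    intro j h
    have := hnorm j
    rw [h] at this
    simp [dotProduct] at this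
  have heigb : ∀ j : Fin k, A *ᵥ b j = lam j • b j := fun j => hA.mulVec_eigenvectorBasis j
  have hlam_ge : ∀ j, d ≤ lam j := fun j => hmin (lam j) (b j) (hbne j) (heigb j)
  set c : Fin k → ℝ := fun j => b j ⬝ᵥ w with hc
  have hrepr : ∀ i, (∑ j, c j * b j i) = w i := by
    intro i
    calc (∑ j, c j * b j i) = ∑ j, ∑ l, w l * (b j l * b j i) := by
          refine Finset.sum_congr rfl fun j _ => ?_
          rw [hc]; simp only [dotProduct, Finset.sum_mul]
          refine Finset.sum_congr rfl fun l _ => ?_; ring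
    _ = ∑ l, w l * ∑ j, b j l * b j i := by
          rw [Finset.sum_comm]
          refine Finset.sum_congr rfl fun l _ => ?_
          rw [Finset.mul_sum]
    _ = w i := by
          simp only [horth]
          simp
  have hAw : A *ᵥ w = fun i => ∑ j, c j * lam j * b j i := by
    funext i
    calc (A *ᵥ w) i = ∑ l, A i l * ∑ j, c j * b j l := by
          simp only [mulVec, dotProduct, hrepr]
    _ = ∑ j, c j * ∑ l, A i l * b j l := by
          simp only [Finset.mul_sum]
          rw [Finset.sum_comm]
          exact Finset.sum_congr rfl fun j _ => Finset.sum_congr rfl fun l _ => by ring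
    _ = ∑ j, c j * lam j * b j i := by
          refine Finset.sum_congr rfl fun j _ => ?_
          have : (A *ᵥ b j) i = (lam j • b j) i := by rw [heigb j]
          simp only [mulVec, dotProduct] at this
          rw [this]; simp; ring
  have hquad : w ⬝ᵥ (A *ᵥ w) = ∑ j, lam j * c j ^ 2 := by
    rw [hAw]
    simp only [dotProduct]
    calc (∑ i, w i * ∑ j, c j * lam j * b j i)
        = ∑ i, ∑ j, c j * lam j * (b j i * w i) := by
          refine Finset.sum_congr rfl fun i _ => ?_
          rw [Finset.mul_sum]
          refine Finset.sum_congr rfl fun j _ => ?_; ring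
    _ = ∑ j, c j * lam j * ∑ i, b j i * w i := by
          rw [Finset.sum_comm]
          refine Finset.sum_congr rfl fun j _ => (Finset.mul_sum _ _ _).symm
    _ = ∑ j, lam j * c j ^ 2 := by
          refine Finset.sum_congr rfl fun j _ => ?_
          rw [hc]; simp only [dotProduct]; ring
  have hsumc : (∑ j, c j ^ 2) = 1 := by
    have : (∑ i, w i * w i) = ∑ j, c j ^ 2 := by
      calc (∑ i, w i * w i) = ∑ i, (∑ j, c j * b j i) * w i := by
            simp only [hrepr]
      _ = ∑ j, c j * ∑ i, b j i * w i := by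
            simp only [Finset.sum_mul, Finset.mul_sum]
            rw [Finset.sum_comm]
            exact Finset.sum_congr rfl fun j _ => Finset.sum_congr rfl fun i _ => by ring
      _ = ∑ j, c j ^ 2 := by
            refine Finset.sum_congr rfl fun j _ => ?_
            rw [hc]; simp only [dotProduct]; ring
    rw [← this]
    simpa [dotProduct] using hw
  have key : w ⬝ᵥ (A *ᵥ w) - d = ∑ j, (lam j - d) * c j ^ 2 := by
    have hexp : (∑ j, (lam j - d) * c j ^ 2)
        = (∑ j, lam j * c j ^ 2) - d * ∑ j, c j ^ 2 := by
      rw [Finset.mul_sum, ← Finset.sum_sub_distrib]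
      exact Finset.sum_congr rfl fun j _ => by ring
    rw [hexp, hquad, hsumc, mul_one]
  have hterm : ∀ j ∈ Finset.univ, (0:ℝ) ≤ (lam j - d) * c j ^ 2 := fun j _ =>
    mul_nonneg (sub_nonneg.mpr (hlam_ge j)) (sq_nonneg _)
  constructor
  · nlinarith [Finset.sum_nonneg hterm, key]
  · intro heq
    have hzero : (∑ j, (lam j - d) * c j ^ 2) = 0 := by rw [← key, heq]; ring
    have hall := (Finset.sum_eq_zero_iff_of_nonneg hterm).mp hzero
    have hcl : ∀ j : Fin k, c j * lam j = c j * d := by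
      intro j
      have := hall j (Finset.mem_univ j)
      rcases mul_eq_zero.mp this with h | h
      · rw [sub_eq_zero.mp h]
      · rw [pow_eq_zero_iff (by norm_num)] at h
        rw [h]; ring
    rw [hAw]
    funext i
    simp only [Pi.smul_apply, smul_eq_mul, ← hrepr i, Finset.mul_sum]
    refine Finset.sum_congr rfl fun j _ => ?_
    rw [hcl j]; ring

theorem vw_sample_antimean_projective_shape (m q n : ℕ) (hn : 0 < n)
    (x : Fin n → Fin q → Fin (m + 1) → ℝ) (hx : ∀ r s, x r s ⬝ᵥ x r s = 1)
    (J : Fin q → Matrix (Fin (m + 1)) (Fin (m + 1)) ℝ)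
    (hJ : ∀ s, J s = (n : ℝ)⁻¹ • ∑ r, vecMulVec (x r s) (x r s))
    (d : Fin q → ℝ) (g : Fin q → Fin (m + 1) → ℝ)
    (hg : ∀ s, g s ⬝ᵥ g s = 1) (heig : ∀ s, J s *ᵥ g s = d s • g s)
    (hmin : ∀ s, ∀ (c : ℝ) (w : Fin (m + 1) → ℝ), w ≠ 0 → J s *ᵥ w = c • w → d s ≤ c)
    (hsimple : ∀ s, ∀ w : Fin (m + 1) → ℝ, J s *ᵥ w = d s • w → ∃ c : ℝ, w = c • g s) :
    {p : Fin q → Fin (m + 1) → ℝ | (∀ s, p s ⬝ᵥ p s = 1) ∧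
        ∀ r : Fin q → Fin (m + 1) → ℝ, (∀ s, r s ⬝ᵥ r s = 1) →
          (n : ℝ)⁻¹ * ∑ i, ∑ s, Matrix.trace
              ((vecMulVec (r s) (r s) - vecMulVec (x i s) (x i s)) *
               (vecMulVec (r s) (r s) - vecMulVec (x i s) (x i s)))
            ≤ (n : ℝ)⁻¹ * ∑ i, ∑ s, Matrix.trace
              ((vecMulVec (p s) (p s) - vecMulVec (x i s) (x i s)) *
               (vecMulVec (p s) (p s) - vecMulVec (x i s) (x i s)))}
      = {p : Fin q → Fin (m + 1) → ℝ | ∃ ε : Fin q → ℝ, (∀ s, ε s = 1 ∨ ε s = -1) ∧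
          p = fun s => ε s • g s} := by
  classical
  have hnR : (0:ℝ) < (n:ℝ) := by exact_mod_cast hn
  -- J is hermitian
  have hJH : ∀ s, (J s).IsHermitian := by
    intro s
    rw [hJ]
    show _ᴴ = _
    ext i j
    simp [Matrix.conjTranspose_apply, Matrix.smul_apply, Matrix.sum_apply,
      vecMulVec_apply, mul_comm]
  -- quadratic form
  set Q : Fin q → (Fin (m+1) → ℝ) → ℝ := fun s w => w ⬝ᵥ (J s *ᵥ w) with hQ
  -- value of Fréchet function
  have hval : ∀ p : Fin q → Fin (m+1) → ℝ, (∀ s, p s ⬝ᵥ p s = 1) →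
      (n : ℝ)⁻¹ * ∑ i, ∑ s, Matrix.trace
          ((vecMulVec (p s) (p s) - vecMulVec (x i s) (x i s)) *
           (vecMulVec (p s) (p s) - vecMulVec (x i s) (x i s)))
        = 2 * q - 2 * ∑ s, Q s (p s) := by
    intro p hp
    have hQp : ∀ s, Q s (p s) = (n:ℝ)⁻¹ * ∑ i, (p s ⬝ᵥ x i s) ^ 2 := by
      intro s
      rw [hQ]
      simp only [hJ s, Matrix.smul_mulVec, dotProduct_smul]
      rw [sum_mulVec', dotProduct_sum']
      simp only [smul_eq_mul]
      congr 1
      refine Finset.sum_congr rfl fun i _ => ?_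
      rw [vmv_mulVec, dotProduct_smul, dotProduct_comm (x i s) (p s)]
      simp [sq]
    have : (∑ i, ∑ s, Matrix.trace
          ((vecMulVec (p s) (p s) - vecMulVec (x i s) (x i s)) *
           (vecMulVec (p s) (p s) - vecMulVec (x i s) (x i s))))
        = ∑ i : Fin n, ∑ s, (2 - 2 * (p s ⬝ᵥ x i s) ^ 2) := by
      refine Finset.sum_congr rfl fun i _ => Finset.sum_congr rfl fun s _ => ?_
      exact trace_quad (p s) (x i s) (hp s) (hx i s)
    rw [this]
    simp only [Finset.sum_sub_distrib, Finset.sum_const, Finset.card_univ,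
      Fintype.card_fin, nsmul_eq_mul]
    rw [Finset.sum_comm]
    have hsum : (∑ s : Fin q, ∑ i : Fin n, 2 * (p s ⬝ᵥ x i s) ^ 2)
        = 2 * (n:ℝ) * ∑ s, Q s (p s) := by
      rw [Finset.mul_sum]
      refine Finset.sum_congr rfl fun s _ => ?_
      rw [hQp s, ← Finset.mul_sum]
      field_simp
    rw [hsum]
    field_simp
  have hray : ∀ s (w : Fin (m+1) → ℝ), w ⬝ᵥ w = 1 →
      d s ≤ Q s w ∧ (Q s w = d s → J s *ᵥ w = d s • w) :=
    fun s w hw => rayleigh_min (J s) (hJH s) (d s) (hmin s) w hw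
  have hQg : ∀ s, Q s (g s) = d s := by
    intro s
    rw [hQ]
    simp only [heig s, dotProduct_smul, smul_eq_mul, hg s, mul_one]
  ext p
  simp only [Set.mem_setOf_eq]
  constructor
  · rintro ⟨hp1, hp2⟩
    have hgle := hp2 g hg
    rw [hval p hp1, hval g hg] at hgle
    have hsumle : (∑ s, Q s (p s)) ≤ ∑ s, Q s (g s) := by linarith
    have hge : ∀ s ∈ Finset.univ, Q s (g s) ≤ Q s (p s) := by
      intro s _
      rw [hQg s]
      exact (hray s (p s) (hp1 s)).1
    have heqsum : (∑ s, Q s (g s)) = ∑ s, Q s (p s) :=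
      le_antisymm (Finset.sum_le_sum hge) hsumle
    have heach := (Finset.sum_eq_sum_iff_of_le hge).mp heqsum
    have hps : ∀ s, ∃ c : ℝ, (c = 1 ∨ c = -1) ∧ p s = c • g s := by
      intro s
      have hQps : Q s (p s) = d s := by
        have := heach s (Finset.mem_univ s)
        rw [← this, hQg s]
      have heigp := (hray s (p s) (hp1 s)).2 hQps
      obtain ⟨c, hc⟩ := hsimple s (p s) heigp
      refine ⟨c, ?_, hc⟩
      have := hp1 s
      rw [hc] at this
      simp only [dotProduct_smul, smul_dotProduct, smul_eq_mul, hg s] at this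
      have hc2 : c * c = 1 := by linarith
      exact mul_self_eq_one_iff.mp hc2
    choose ε hε1 hε2 using hps
    exact ⟨ε, hε1, funext hε2⟩
  · rintro ⟨ε, hε, rfl⟩
    have hunit : ∀ s, (ε s • g s) ⬝ᵥ (ε s • g s) = 1 := by
      intro s
      simp only [dotProduct_smul, smul_dotProduct, smul_eq_mul, hg s]
      rcases hε s with h | h <;> rw [h] <;> norm_num
    refine ⟨hunit, ?_⟩
    intro r hr
    rw [hval r hr, hval _ hunit]
    have hQe : ∀ s, Q s (ε s • g s) = d s := by
      intro s
      show (ε s • g s) ⬝ᵥ (J s *ᵥ (ε s • g s)) = d s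
      rw [Matrix.mulVec_smul, heig s]
      simp only [dotProduct_smul, smul_dotProduct, smul_eq_mul, hg s]
      rcases hε s with h | h <;> rw [h] <;> ring
    have h1 : (∑ s, Q s (ε s • g s)) = ∑ s, d s :=
      Finset.sum_congr rfl fun s _ => hQe s
    have h2 : (∑ s, d s) ≤ ∑ s, Q s (r s) :=
      Finset.sum_le_sum fun s _ => (hray s (r s) (hr s)).1
    rw [h1]
    linarith
end
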